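/- arXiv:1509.02209 — 2 statements merged into one kernel-verified Lean document; each statement's English description precedes it below -/
import Mathlib

section
/- Fix ℓ ≥ 1 and m ≥ 1, and let f₀ : ℕ → ℚ be the sequence with f₀(j) = 0 for 1 ≤ j ≤ ℓ and f₀(j) = 1 for j ≥ ℓ + 1. Then for every n ≥ 1, the m-th invert transform of f₀ satisfies (𝒴^m f₀)(n) = Σ_{k=1}^{⌊(n−1)/ℓ⌋} C(n − ℓk − 1, k − 1) · m^(k−1). (This number counts the words of length n over the alphabet {0, 1, …, m}, starting with 1, in which every nonzero letter is followed by at least ℓ zeros.) -/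
/-! Write `g = sparseWordCount ℓ m` and `Gₘ = ∑ₙ g(n) tⁿ`. Pascal's rule gives
`g(n+1) = g(n) + m g(n-ℓ) + [n = ℓ]`, i.e. `Gₘ Pₘ = t^(ℓ+1)` with `Pₘ = 1 - t - m t^(ℓ+1)`.
Since `Pₘ₊₁ = Pₘ - t^(ℓ+1)`, it follows that `(1 + Gₘ₊₁)(1 - Gₘ) = 1`, which says that the invert
transform sends `Gₘ` to `Gₘ₊₁`. As `G₀` is the series of `f₀`, induction on `m` concludes. -/

/-- The invert transform of a sequence `x : ℕ → ℚ` (indexed from 1, `x 0` ignored):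
`(𝒴x)(0) = 0` and `(𝒴x)(n) = x n + ∑_{j=1}^{n-1} x j * (𝒴x)(n-j)` for `n ≥ 1`. -/
def invert (x : ℕ → ℚ) : ℕ → ℚ
  | 0 => 0
  | n + 1 => x (n + 1) + ∑ j ∈ Finset.range n, x (j + 1) * invert x (n - j)
  termination_by n => n
  decreasing_by omega

/-- The partial Bell polynomial `B_{n,k}(z₁, z₂, …)`, evaluated at a sequence of rationals
`z` (indexed from 1, `z 0` ignored): the sum over all finitely supported `α : ℕ → ℕ` with
`α 0 = 0`, `∑ i, α i = k` and `∑ i, i * α i = n` of `(n! / ∏ i, (α i)!) * ∏ i (z i / i!)^(α i)`. -/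
def partialBell (n k : ℕ) (z : ℕ → ℚ) : ℚ :=
  ∑ α ∈ ((Finset.range (n + 1)).finsuppAntidiag k).filter
      (fun α => (∑ i ∈ Finset.range (n + 1), i * α i) = n ∧ α 0 = 0),
    ((n.factorial : ℚ) / ∏ i ∈ Finset.range (n + 1), ((α i).factorial : ℚ)) *
      ∏ i ∈ Finset.range (n + 1), (z i / (i.factorial : ℚ)) ^ α i

open PowerSeries

section Invert

variable {x y : ℕ → ℚ}

theorem invert_apply_zero (x : ℕ → ℚ) : invert x 0 = 0 := by
  simp [invert]

theorem invert_congr (h : ∀ n, 1 ≤ n → x n = y n) : invert x = invert y := by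
  funext n
  induction n using Nat.strong_induction_on with
  | _ n ih =>
    rcases n with _ | n
    · simp only [invert_apply_zero]
    · rw [invert, invert, h (n + 1) n.succ_pos]
      congr 1
      refine Finset.sum_congr rfl fun j _ => ?_
      rw [h (j + 1) j.succ_pos, ih (n - j) (by omega)]

theorem mk_invert (hx : x 0 = 0) : mk (invert x) = mk x + mk x * mk (invert x) := by
  ext n
  rcases n with _ | n
  · simp [invert_apply_zero, hx]
  · rw [coeff_mk, map_add, coeff_mul, Finset.Nat.sum_antidiagonal_eq_sum_range_succ_mk,
      Finset.sum_range_succ', Finset.sum_range_succ, invert]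
    simp [hx, invert_apply_zero]

theorem one_add_mk_invert_mul (hx : x 0 = 0) : (1 + mk (invert x)) * (1 - mk x) = 1 := by
  linear_combination mk_invert hx

theorem invert_eq_of_mul_eq_one (hx : x 0 = 0) (h : (1 + mk y) * (1 - mk x) = 1) :
    invert x = y := by
  have h1 := left_inv_eq_right_inv (one_add_mk_invert_mul hx) (mul_comm (1 + mk y) _ ▸ h)
  funext n
  simpa using congrArg (coeff n) h1

end Invert

section SparseWords

variable (ℓ m : ℕ)

def sparseWordCount (n : ℕ) : ℚ :=
  ∑ k ∈ Finset.Icc 1 ((n - 1) / ℓ), ((n - ℓ * k - 1).choose (k - 1) : ℚ) * (m : ℚ) ^ (k - 1)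

/-- The summand of `sparseWordCount` for `k = j + 1`, guarded by `ℓ * k < n` so that it obeys
Pascal's rule in `n` without side conditions. -/
def sparseWordTerm (n j : ℕ) : ℚ :=
  if ℓ * (j + 1) < n then ((n - ℓ * (j + 1) - 1).choose j : ℚ) * (m : ℚ) ^ j else 0

theorem sparseWordTerm_succ_zero (n : ℕ) :
    sparseWordTerm ℓ m (n + 1) 0 = sparseWordTerm ℓ m n 0 + if n = ℓ then 1 else 0 := by
  unfold sparseWordTerm
  split_ifs <;> simp_all <;> omega

theorem sparseWordTerm_succ_succ (n j : ℕ) :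
    sparseWordTerm ℓ m (n + 1) (j + 1)
      = sparseWordTerm ℓ m n (j + 1) + m * sparseWordTerm ℓ m (n - ℓ) j := by
  unfold sparseWordTerm
  have e : ℓ * (j + 1 + 1) = ℓ * (j + 1) + ℓ := by ring
  rcases lt_trichotomy (ℓ * (j + 1 + 1)) n with h | h | h
  · rw [if_pos (by omega), if_pos h, if_pos (by omega),
      show n + 1 - ℓ * (j + 1 + 1) - 1 = n - ℓ * (j + 1 + 1) - 1 + 1 by omega,
      show n - ℓ - ℓ * (j + 1) - 1 = n - ℓ * (j + 1 + 1) - 1 by omega, Nat.choose_succ_succ']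
    push_cast
    ring
  · rw [if_pos (by omega), if_neg (by omega), if_neg (by omega),
      show n + 1 - ℓ * (j + 1 + 1) - 1 = 0 by omega, Nat.choose_zero_succ]
    simp
  · rw [if_neg (by omega), if_neg (by omega), if_neg (by omega)]
    simp

variable {ℓ}

theorem sparseWordCount_eq_sum_range (hℓ : 1 ≤ ℓ) {n K : ℕ} (hK : n ≤ K) :
    sparseWordCount ℓ m n = ∑ j ∈ Finset.range K, sparseWordTerm ℓ m n j := by
  have hM : (n - 1) / ℓ ≤ K := (Nat.div_le_self _ _).trans (by omega)
  rw [sparseWordCount, ← Finset.Ico_add_one_right_eq_Icc, Finset.sum_Ico_eq_sum_range,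
    Nat.add_sub_cancel]
  refine Finset.sum_subset_zero_on_sdiff (Finset.range_subset_range.2 hM) ?_ ?_
  · intro j hj
    simp only [Finset.mem_sdiff, Finset.mem_range, not_lt] at hj
    have hlt : n - 1 < (j + 1) * ℓ :=
      (Nat.div_lt_iff_lt_mul (by omega)).1 (by omega : (n - 1) / ℓ < j + 1)
    exact if_neg (by rw [mul_comm]; omega)
  · intro j hj
    have hle : (j + 1) * ℓ ≤ n - 1 := (Nat.le_div_iff_mul_le (by omega)).1 (Finset.mem_range.1 hj)
    have hpos : ℓ ≤ (j + 1) * ℓ := Nat.le_mul_of_pos_left ℓ j.succ_pos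
    rw [sparseWordTerm, if_pos (show ℓ * (j + 1) < n by rw [mul_comm]; omega), add_comm 1 j,
      Nat.add_sub_cancel]

theorem sparseWordCount_apply_zero : sparseWordCount ℓ m 0 = 0 := by
  simp [sparseWordCount]

theorem sparseWordCount_apply_succ (hℓ : 1 ≤ ℓ) (n : ℕ) :
    sparseWordCount ℓ m (n + 1)
      = sparseWordCount ℓ m n + m * sparseWordCount ℓ m (n - ℓ) + if n = ℓ then 1 else 0 := by
  rw [sparseWordCount_eq_sum_range m hℓ (le_refl (n + 1)),
    sparseWordCount_eq_sum_range m hℓ n.le_succ, sparseWordCount_eq_sum_range m hℓ (n.sub_le ℓ),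
    Finset.sum_range_succ', Finset.sum_range_succ']
  simp only [sparseWordTerm_succ_succ, sparseWordTerm_succ_zero, Finset.sum_add_distrib,
    Finset.mul_sum]
  ring

theorem mk_sparseWordCount_mul (hℓ : 1 ≤ ℓ) :
    mk (sparseWordCount ℓ m) * (1 - X - C (m : ℚ) * X ^ (ℓ + 1)) = X ^ (ℓ + 1) := by
  suffices h : mk (sparseWordCount ℓ m)
      = X * mk (sparseWordCount ℓ m) + C (m : ℚ) * (X ^ (ℓ + 1) * mk (sparseWordCount ℓ m))
        + X ^ (ℓ + 1) by
    linear_combination h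
  ext n
  rcases n with _ | n
  · simp [sparseWordCount_apply_zero]
  · rw [map_add, map_add, coeff_succ_X_mul, coeff_C_mul, coeff_X_pow_mul', coeff_X_pow,
      coeff_mk, coeff_mk, sparseWordCount_apply_succ m hℓ]
    by_cases h : ℓ ≤ n
    · simp [h, coeff_mk]
    · simp [h, show n - ℓ = 0 by omega, sparseWordCount_apply_zero]

theorem one_add_mk_sparseWordCount_succ_mul (hℓ : 1 ≤ ℓ) :
    (1 + mk (sparseWordCount ℓ (m + 1))) * (1 - mk (sparseWordCount ℓ m)) = 1 := by
  set P : ℚ⟦X⟧ := 1 - X - C (m : ℚ) * X ^ (ℓ + 1)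
  have hP : P ≠ 0 := fun h => by simpa [P] using congrArg constantCoeff h
  have h₀ : mk (sparseWordCount ℓ m) * P = X ^ (ℓ + 1) := mk_sparseWordCount_mul m hℓ
  have h₁ : mk (sparseWordCount ℓ (m + 1)) * (P - X ^ (ℓ + 1)) = X ^ (ℓ + 1) := by
    have h := mk_sparseWordCount_mul (m + 1) hℓ
    rw [Nat.cast_succ, map_add, map_one] at h
    linear_combination h
  refine mul_right_cancel₀ hP ?_
  linear_combination h₁ - (1 + mk (sparseWordCount ℓ (m + 1))) * h₀

theorem invert_sparseWordCount (hℓ : 1 ≤ ℓ) :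
    invert (sparseWordCount ℓ m) = sparseWordCount ℓ (m + 1) :=
  invert_eq_of_mul_eq_one (sparseWordCount_apply_zero m)
    (one_add_mk_sparseWordCount_succ_mul m hℓ)

theorem sparseWordCount_zero (hℓ : 1 ≤ ℓ) {n : ℕ} (hn : 1 ≤ n) :
    sparseWordCount ℓ 0 n = if ℓ + 1 ≤ n then 1 else 0 := by
  obtain ⟨n, rfl⟩ := Nat.exists_eq_add_of_le' hn
  rw [sparseWordCount_eq_sum_range 0 hℓ le_rfl, Finset.sum_range_succ']
  simp [sparseWordTerm]

end SparseWords

theorem stmt_9_general (ℓ m : ℕ) (hℓ : 1 ≤ ℓ) (f₀ : ℕ → ℚ)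
    (hf : ∀ j, 1 ≤ j → f₀ j = if ℓ + 1 ≤ j then 1 else 0) (n : ℕ) (hn : 1 ≤ n) :
    (invert^[m] f₀) n
      = ∑ k ∈ Finset.Icc 1 ((n - 1) / ℓ),
          ((n - ℓ * k - 1).choose (k - 1) : ℚ) * (m : ℚ) ^ (k - 1) := by
  have iterate_eq : ∀ i, ∀ n, 1 ≤ n → (invert^[i] f₀) n = sparseWordCount ℓ i n := by
    intro i
    induction i with
    | zero => exact fun n hn => (hf n hn).trans (sparseWordCount_zero hℓ hn).symm
    | succ i ih =>
      intro n _
      rw [Function.iterate_succ_apply', invert_congr ih, invert_sparseWordCount i hℓ]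
  exact iterate_eq m n hn

/-- For `f₀ j = 0` if `1 ≤ j ≤ ℓ` and `1` if `j ≥ ℓ+1`, and `m ≥ 1`:
`(𝒴^m f₀)(n) = ∑_{k=1}^{⌊(n-1)/ℓ⌋} C(n-ℓk-1, k-1) m^(k-1)`,
which counts words of length `n` over `{0,…,m}` starting with `1` in which every
nonzero letter is followed by at least `ℓ` zeros. -/
theorem stmt_9 (ℓ m : ℕ) (hℓ : 1 ≤ ℓ) (hm : 1 ≤ m) (f₀ : ℕ → ℚ)
    (hf : ∀ j, 1 ≤ j → f₀ j = if ℓ + 1 ≤ j then 1 else 0) (n : ℕ) (hn : 1 ≤ n) :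
    (invert^[m] f₀) n
      = ∑ k ∈ Finset.Icc 1 ((n - 1) / ℓ),
          ((n - ℓ * k - 1).choose (k - 1) : ℚ) * (m : ℚ) ^ (k - 1) :=
  stmt_9_general ℓ m hℓ f₀ hf n hn
end

section
/- Fix ℓ ≥ 1 and integers n ≥ k ≥ 1. Let z be the sequence with z_j = j! for 1 ≤ j ≤ ℓ and z_j = 0 for j > ℓ. Then B_{n,k}(z₁, z₂, …) = (n!/k!) · Σ_{j=0}^{⌊(n−k)/ℓ⌋} (−1)^j · C(k, j) · C(n − ℓj − 1, k − 1). -/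
/-! The multinomial theorem gives `B_{n,k}(z) = n!/k! · [xⁿ] (∑_{i ≥ 1} zᵢ xⁱ / i!)ᵏ`. For the
truncated factorials the inner series is `x + ⋯ + x^ℓ = x (1 - x^ℓ) / (1 - x)`, so the coefficient
is read off from the binomial expansion of `(1 - x^ℓ)ᵏ` and the negative binomial series
`(1 - x)⁻ᵏ = ∑ₘ C(k - 1 + m, k - 1) xᵐ`. -/

open Finset PowerSeries Nat

theorem Finset.sum_finsuppAntidiag_eq_sum_piAntidiag {ι μ M : Type*} [DecidableEq ι]
    [AddCommMonoid μ] [HasAntidiagonal μ] [DecidableEq μ] [AddCommMonoid M]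
    (s : Finset ι) (n : μ) (F : (ι → μ) → M) :
    ∑ α ∈ s.finsuppAntidiag n, F α = ∑ f ∈ s.piAntidiag n, F f := by
  rw [finsuppAntidiag, sum_map]
  exact sum_attach (s.piAntidiag n) F

theorem Finset.sum_pow_eq_sum_finsuppAntidiag {ι R : Type*} [DecidableEq ι] [CommSemiring R]
    (s : Finset ι) (f : ι → R) (k : ℕ) :
    (∑ i ∈ s, f i) ^ k
      = ∑ α ∈ s.finsuppAntidiag k, Nat.multinomial s α * ∏ i ∈ s, f i ^ α i := by
  rw [sum_pow_eq_sum_piAntidiag,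
    sum_finsuppAntidiag_eq_sum_piAntidiag s k fun α => Nat.multinomial s α * ∏ i ∈ s, f i ^ α i]

theorem PowerSeries.coeff_sum_C_mul_X_pow_pow {R : Type*} [CommSemiring R]
    (s : Finset ℕ) (w : ℕ → R) (n k : ℕ) :
    coeff n ((∑ i ∈ s, C (w i) * X ^ i) ^ k)
      = ∑ α ∈ s.finsuppAntidiag k with ∑ i ∈ s, i * α i = n,
          Nat.multinomial s α * ∏ i ∈ s, w i ^ α i := by
  rw [sum_pow_eq_sum_finsuppAntidiag, map_sum, sum_filter]
  refine sum_congr rfl fun α _ => ?_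
  simp_rw [mul_pow, ← map_pow, ← pow_mul, prod_mul_distrib, ← map_prod, prod_pow_eq_pow_sum,
    ← map_natCast (C (R := R)), ← mul_assoc, ← map_mul, coeff_C_mul_X_pow, mul_comm _ (α _),
    eq_comm (a := n)]

theorem PowerSeries.coeff_pow_eq_of_coeff_eq {R : Type*} [CommSemiring R] {f g : R⟦X⟧} {n : ℕ}
    (h : ∀ i ≤ n, coeff i f = coeff i g) (k : ℕ) :
    coeff n (f ^ k) = coeff n (g ^ k) := by
  have htrunc : trunc (n + 1) f = trunc (n + 1) g := by
    ext i
    simp only [coeff_trunc]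
    split_ifs with hi
    · exact h i (by omega)
    · rfl
  rw [← coeff_coe_trunc_of_lt (lt_add_one n), ← trunc_trunc_pow, htrunc, trunc_trunc_pow,
    coeff_coe_trunc_of_lt (lt_add_one n)]

theorem partialBell_eq_factorial_div_mul_coeff_pow (n k : ℕ) (z : ℕ → ℚ) :
    partialBell n k z = (n ! / k ! : ℚ) *
      coeff n ((∑ i ∈ range (n + 1), C (if i = 0 then 0 else z i / i !) * X ^ i) ^ k) := by
  set w : ℕ → ℚ := fun i => if i = 0 then 0 else z i / (i ! : ℚ)
  rw [coeff_sum_C_mul_X_pow_pow, mul_sum, partialBell, ← filter_filter]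
  -- terms with `α 0 ≠ 0` vanish on the right because the series has no constant term
  refine (sum_congr rfl fun α hα => ?_).trans (sum_filter_of_ne fun α _ hne => ?_)
  · obtain ⟨hk, -⟩ := mem_finsuppAntidiag.1 (mem_filter.1 (mem_filter.1 hα).1).1
    have h0 : α 0 = 0 := (mem_filter.1 hα).2
    have hz : ∏ i ∈ range (n + 1), (z i / i !) ^ α i = ∏ i ∈ range (n + 1), w i ^ α i :=
      prod_congr rfl fun i _ => by rcases eq_or_ne i 0 with rfl | hi <;> simp [w, *]
    have hmultinomial :
        (∏ i ∈ range (n + 1), ((α i)! : ℚ)) * Nat.multinomial (range (n + 1)) α = k ! := by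
      exact_mod_cast hk ▸ Nat.multinomial_spec (range (n + 1)) α
    rw [hz, ← mul_assoc]
    field_simp
    rw [← hmultinomial]
    ring
  · by_contra h0
    exact hne (by rw [prod_eq_zero (mem_range.2 n.succ_pos) (by simp [h0]), mul_zero, mul_zero])

theorem PowerSeries.coeff_X_pow_mul_invOneSubPow {R : Type*} [CommRing R] {k : ℕ} (hk : 0 < k)
    (m n : ℕ) :
    coeff n (X ^ m * (invOneSubPow R k).val)
      = if m ≤ n then ((k - 1 + (n - m)).choose (k - 1) : R) else 0 := by
  rw [coeff_X_pow_mul', invOneSubPow_val_eq_mk_sub_one_add_choose_of_pos R k hk, coeff_mk]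

theorem PowerSeries.sum_Icc_X_pow_mul_one_sub {R : Type*} [CommRing R] (ℓ : ℕ) :
    (∑ i ∈ Icc 1 ℓ, X ^ i : R⟦X⟧) * (1 - X) = X * (1 - X ^ ℓ) := by
  rw [← Ico_add_one_right_eq_Icc, geom_sum_Ico_mul_neg _ (by omega)]
  ring

theorem PowerSeries.sum_Icc_X_pow_pow {R : Type*} [CommRing R] (ℓ k : ℕ) :
    (∑ i ∈ Icc 1 ℓ, X ^ i : R⟦X⟧) ^ k
      = ∑ j ∈ range (k + 1),
          C ((-1) ^ j * k.choose j : R) * (X ^ (k + ℓ * j) * (invOneSubPow R k).val) := by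
  have hU : (1 - X : R⟦X⟧) ^ k * (invOneSubPow R k).val = 1 := by
    rw [← invOneSubPow_inv_eq_one_sub_pow]
    exact (invOneSubPow R k).inv_val
  calc (∑ i ∈ Icc 1 ℓ, X ^ i : R⟦X⟧) ^ k
      = ((∑ i ∈ Icc 1 ℓ, X ^ i) * (1 - X)) ^ k * (invOneSubPow R k).val := by
        rw [mul_pow, mul_assoc, hU, mul_one]
    _ = X ^ k * (-X ^ ℓ + 1) ^ k * (invOneSubPow R k).val := by
        rw [sum_Icc_X_pow_mul_one_sub, mul_pow, neg_add_eq_sub]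
    _ = _ := by
        rw [add_pow, mul_sum, sum_mul]
        refine sum_congr rfl fun j _ => ?_
        rw [map_mul, map_pow, map_neg, map_one, map_natCast, pow_add, neg_pow, ← pow_mul]
        ring

theorem PowerSeries.coeff_sum_Icc_X_pow_pow {R : Type*} [CommRing R] (ℓ n : ℕ) {k : ℕ}
    (hk : 0 < k) :
    coeff n ((∑ i ∈ Icc 1 ℓ, X ^ i : R⟦X⟧) ^ k)
      = ∑ j ∈ range (k + 1) with k + ℓ * j ≤ n,
          (-1) ^ j * k.choose j * ((n - ℓ * j - 1).choose (k - 1) : R) := by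
  rw [sum_Icc_X_pow_pow, map_sum, sum_filter]
  refine sum_congr rfl fun j _ => ?_
  rw [coeff_C_mul, coeff_X_pow_mul_invOneSubPow hk]
  split_ifs with h
  · rw [show k - 1 + (n - (k + ℓ * j)) = n - ℓ * j - 1 by omega]
  · rw [mul_zero]

/-- Bell identity 1: for `ℓ ≥ 1` and `n ≥ k ≥ 1`,
`B_{n,k}(1!, 2!, …, ℓ!, 0, …) = (n!/k!) ∑_{j=0}^{⌊(n-k)/ℓ⌋} (-1)^j C(k,j) C(n-ℓj-1, k-1)`. -/
theorem stmt_16 (ℓ : ℕ) (hℓ : 1 ≤ ℓ) (n k : ℕ) (hk : 1 ≤ k) (hkn : k ≤ n)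
    (z : ℕ → ℚ) (hz : ∀ j, 1 ≤ j → z j = if j ≤ ℓ then (j.factorial : ℚ) else 0) :
    partialBell n k z
      = ((n.factorial : ℚ) / (k.factorial : ℚ)) *
          ∑ j ∈ Finset.range ((n - k) / ℓ + 1),
            (-1 : ℚ) ^ j * (k.choose j : ℚ) * ((n - ℓ * j - 1).choose (k - 1) : ℚ) := by
  have hseries : ∀ i ≤ n,
      coeff i (∑ i ∈ range (n + 1), C (if i = 0 then 0 else z i / i !) * X ^ i)
        = coeff i (∑ i ∈ Icc 1 ℓ, X ^ i : ℚ⟦X⟧) := by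
    intro i hi
    rcases eq_or_ne i 0 with rfl | hi0
    · simp
    · simp [hz i (Nat.one_le_iff_ne_zero.2 hi0), hi0, hi, Nat.one_le_iff_ne_zero]
      split_ifs <;> simp [Nat.factorial_ne_zero]
  have hrange : ∀ j, k + ℓ * j ≤ n ↔ j ∈ range ((n - k) / ℓ + 1) := fun j => by
    rw [mem_range, Nat.lt_succ_iff, Nat.le_div_iff_mul_le hℓ, mul_comm]
    omega
  rw [partialBell_eq_factorial_div_mul_coeff_pow, coeff_pow_eq_of_coeff_eq hseries,
    coeff_sum_Icc_X_pow_pow ℓ n hk]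
  congr 1
  -- the filter keeps the indices `j ≤ (n - k) / ℓ` up to `k`; beyond `k`, `C(k, j) = 0`
  refine sum_subset (fun j hj => (hrange j).1 (mem_filter.1 hj).2) fun j hj hj' => ?_
  have hkj : k < j := by
    by_contra! h
    exact hj' (mem_filter.2 ⟨mem_range.2 (by omega), (hrange j).2 hj⟩)
  rw [Nat.choose_eq_zero_of_lt hkj, Nat.cast_zero, mul_zero, zero_mul]
end
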